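/- Let (M⁽¹⁾, μ⁽¹⁾) and (M⁽²⁾, μ⁽²⁾) be Lebesgue probability spaces, P_n⁽ⁱ⁾ monotone generating sequences of finite measurable partitions, T_n⁽ⁱ⁾ automorphisms with T_n⁽ⁱ⁾ P_n⁽ⁱ⁾ = P_n⁽ⁱ⁾ and T_n⁽ⁱ⁾ → T⁽ⁱ⁾ weakly. Suppose there exist measure-preserving bijections K_n between the partition quotients M⁽¹⁾/P_n⁽¹⁾ and M⁽²⁾/P_n⁽²⁾ with K_n⁻¹ ∘ T_n⁽²⁾ ∘ K_n = T_n⁽¹⁾ on partition atoms and K_{n+1}(P_n⁽¹⁾) = K_n(P_n⁽¹⁾). Then T⁽¹⁾ and T⁽²⁾ are metrically (measure-theoretically) isomorphic. -/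

import Mathlib

/-!
Code a point `y` of `M₂` by the sequence of its atoms `(P₂ n y)ₙ`; off a null set this coding
is injective, since `P₂` is generating. By the coherence of the `K n`, the sequence
`(K n (P₁ n x))ₙ` is a code with the same law under `μ₁`: both laws see a cylinder only through
one level `N`, where `K N` is a measure-preserving bijection of atoms. Composing with an a.e.
inverse of the coding gives a measure-preserving `Φ` with `Φ x ∈ K n (P₁ n x)` for all `n`; it is
a.e. injective because `P₁` is generating, hence a.e. invertible.

For `m ≥ n`, `T₂ m` carries `K n A` (`A` a level-`n` atom) onto the `K m`-image of the
level-`m`-saturated set `T₁ m '' A`, so `Φ⁻¹' (T₂ m '' K n A) = T₁ m '' A` a.e.; weak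
convergence passes this to `Φ⁻¹' (S₂ '' K n A) = S₁ '' A`, and letting `A` shrink to a point
gives `Φ ∘ S₁ = S₂ ∘ Φ` a.e.
-/

open MeasureTheory Filter Set
open scoped ENNReal symmDiff

structure IsFinitePartition {α : Type*} [MeasurableSpace α] (P : α → Set α) : Prop where
  mem : ∀ x, x ∈ P x
  eq_or_disjoint : ∀ x y, P x = P y ∨ Disjoint (P x) (P y)
  measurableSet : ∀ x, MeasurableSet (P x)
  finite_range : (range P).Finite

namespace IsFinitePartition

variable {α : Type*} [MeasurableSpace α] {P : α → Set α}

theorem eq_of_mem (hP : IsFinitePartition P) {x y : α} (h : y ∈ P x) : P y = P x :=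
  (hP.eq_or_disjoint y x).resolve_right fun hd => disjoint_left.1 hd (hP.mem y) h

theorem eq_of_mem_of_mem (hP : IsFinitePartition P) {x y z : α} (hx : z ∈ P x)
    (hy : z ∈ P y) : P x = P y :=
  (hP.eq_of_mem hx).symm.trans (hP.eq_of_mem hy)

theorem setOf_eq_biUnion (hP : IsFinitePartition P) (p : Set α → Prop) :
    {x | p (P x)} = ⋃ A ∈ range P ∩ {A | p A}, A := by
  ext x
  simp only [mem_ofPred_eq, mem_iUnion, mem_inter_iff, mem_range, exists_prop]
  constructor
  · exact fun hx => ⟨P x, ⟨⟨x, rfl⟩, hx⟩, hP.mem x⟩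
  · rintro ⟨_, ⟨⟨y, rfl⟩, hy⟩, hx⟩
    rwa [hP.eq_of_mem hx]

theorem measurable_comp {β : Type*} [MeasurableSpace β] (hP : IsFinitePartition P)
    (g : Set α → β) : Measurable fun x => g (P x) := fun S _ => by
  rw [← ofPred_mem_eq (s := S), preimage_ofPred_eq, hP.setOf_eq_biUnion fun A => g A ∈ S]
  exact .biUnion (hP.finite_range.subset inter_subset_left).countable
    fun A ⟨⟨x, hx⟩, _⟩ => hx ▸ hP.measurableSet x

theorem measure_setOf (hP : IsFinitePartition P) (μ : Measure α) (p : Set α → Prop) :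
    μ {x | p (P x)} = ∑' A : ↥(range P ∩ {A | p A}), μ A := by
  rw [hP.setOf_eq_biUnion p]
  refine measure_biUnion (hP.finite_range.subset inter_subset_left).countable ?_
    fun A ⟨⟨x, hx⟩, _⟩ => hx ▸ hP.measurableSet x
  rintro _ ⟨⟨x, rfl⟩, -⟩ _ ⟨⟨y, rfl⟩, -⟩ hne
  exact (hP.eq_or_disjoint x y).resolve_left hne

end IsFinitePartition

structure IsAtomIso {α β : Type*} [MeasurableSpace α] [MeasurableSpace β] (μ : Measure α)
    (ν : Measure β) (P : α → Set α) (Q : β → Set β) (k : Set α → Set β) : Prop where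
  exists_eq : ∀ x, ∃ y, k (P x) = Q y
  measure_eq : ∀ x, ν (k (P x)) = μ (P x)
  inj : ∀ x x', k (P x) = k (P x') → P x = P x'
  surj : ∀ y, ∃ x, k (P x) = Q y

theorem IsAtomIso.measure_setOf {α β : Type*} [MeasurableSpace α] [MeasurableSpace β]
    {μ : Measure α} {ν : Measure β} {P : α → Set α} {Q : β → Set β} {k : Set α → Set β}
    (hk : IsAtomIso μ ν P Q k) (hP : IsFinitePartition P) (hQ : IsFinitePartition Q)
    (p : Set β → Prop) : μ {x | p (k (P x))} = ν {y | p (Q y)} := by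
  have hbij : BijOn k (range P ∩ {A | p (k A)}) (range Q ∩ {B | p B}) := by
    refine ⟨?_, ?_, ?_⟩
    · rintro _ ⟨⟨x, rfl⟩, hx⟩
      obtain ⟨y, hy⟩ := hk.exists_eq x
      exact ⟨⟨y, hy.symm⟩, hx⟩
    · rintro _ ⟨⟨x, rfl⟩, -⟩ _ ⟨⟨x', rfl⟩, -⟩ h
      exact hk.inj x x' h
    · rintro _ ⟨⟨y, rfl⟩, hy⟩
      obtain ⟨x, hx⟩ := hk.surj y
      exact ⟨P x, ⟨⟨x, rfl⟩, by rwa [mem_ofPred_eq, hx]⟩, hx⟩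
  rw [show {x | p (k (P x))} = {x | (p ∘ k) (P x)} from rfl, hP.measure_setOf μ (p ∘ k),
    hQ.measure_setOf ν p, ← (hbij.equiv k).tsum_eq]
  refine tsum_congr fun ⟨A, ⟨x, hx⟩, _⟩ => ?_
  subst hx
  exact (hk.measure_eq x).symm

theorem IsAtomIso.measurableSet {α β : Type*} [MeasurableSpace α] [MeasurableSpace β]
    {μ : Measure α} {ν : Measure β} {P : α → Set α} {Q : β → Set β} {k : Set α → Set β}
    (hk : IsAtomIso μ ν P Q k) (hQ : IsFinitePartition Q) (x : α) : MeasurableSet (k (P x)) := by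
  obtain ⟨y, hy⟩ := hk.exists_eq x
  exact hy ▸ hQ.measurableSet y

theorem MeasureTheory.MeasurePreserving.exists_ae_inverse {α β : Type*} [MeasurableSpace α]
    [StandardBorelSpace α] [MeasurableSpace β] [MeasurableSpace.CountablySeparated β]
    [Nonempty α] {μ : Measure α} {ν : Measure β} {f : α → β} (hf : MeasurePreserving f μ ν)
    {s : Set α} (hs : s ∈ ae μ) (hinj : InjOn f s) :
    ∃ g : β → α, MeasurePreserving g ν μ ∧ (∀ᵐ x ∂μ, g (f x) = x) ∧ ∀ᵐ y ∂ν, f (g y) = y := by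
  obtain ⟨t, ht, htm, hts⟩ := Eventually.exists_measurable_mem hs
  have : StandardBorelSpace t := htm.standardBorel
  have he : MeasurableEmbedding (t.domRestrict f) :=
    (hf.measurable.comp measurable_subtype_coe).measurableEmbedding
      (injOn_iff_injective.1 (hinj.mono hts))
  set g := Function.extend (t.domRestrict f) Subtype.val fun _ => Classical.arbitrary α
  have hgf : ∀ᵐ x ∂μ, g (f x) = x := by
    filter_upwards [ht] with x hx
    exact he.injective.extend_apply _ _ ⟨x, hx⟩
  have hg : Measurable g := he.measurable_extend measurable_subtype_coe measurable_const
  have hgmp : MeasurePreserving g ν μ := by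
    refine ⟨hg, ?_⟩
    rw [← hf.map_eq, Measure.map_map hg hf.measurable]
    exact (Measure.map_congr hgf).trans Measure.map_id
  refine ⟨g, hgmp, hgf, ?_⟩
  have hrange : ∀ᵐ y ∂ν, y ∈ f '' t := by
    have hm : MeasurableSet (f '' t) := by simpa [range_domRestrict] using he.measurableSet_range
    rw [← hf.map_eq]
    refine (ae_map_iff (p := (· ∈ f '' t)) hf.measurable.aemeasurable hm).2 ?_
    filter_upwards [ht] with x hx using mem_image_of_mem f hx
  filter_upwards [hrange]
  rintro _ ⟨x, hx, rfl⟩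
  rw [show g (f x) = x from he.injective.extend_apply _ _ ⟨x, hx⟩]

theorem MeasureTheory.MeasurePreserving.preimage_ae_eq_of_tendsto {α β : Type*}
    [MeasurableSpace α] [MeasurableSpace β] {μ : Measure α} {ν : Measure β} {Φ : α → β}
    (hΦ : MeasurePreserving Φ μ ν) {A : ℕ → Set α} {A' : Set α} {B : ℕ → Set β} {B' : Set β}
    (hB : ∀ m, MeasurableSet (B m)) (hB' : MeasurableSet B')
    (hA : Tendsto (fun m => μ (A m ∆ A')) atTop (nhds 0))
    (hBt : Tendsto (fun m => ν (B m ∆ B')) atTop (nhds 0))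
    (h : ∀ᶠ m in atTop, Φ ⁻¹' B m =ᵐ[μ] A m) : Φ ⁻¹' B' =ᵐ[μ] A' := by
  rw [← measure_symmDiff_eq_zero_iff, ← nonpos_iff_eq_zero, ← add_zero (0 : ℝ≥0∞)]
  refine ge_of_tendsto (hBt.add hA) (h.mono fun m hm => ?_)
  calc μ ((Φ ⁻¹' B') ∆ A')
      ≤ μ ((Φ ⁻¹' B') ∆ (Φ ⁻¹' B m)) + (μ ((Φ ⁻¹' B m) ∆ A m) + μ (A m ∆ A')) :=
        (measure_symmDiff_le _ _ _).trans (add_le_add le_rfl (measure_symmDiff_le _ _ _))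
    _ = ν (B m ∆ B') + μ (A m ∆ A') := by
        rw [measure_symmDiff_eq_zero_iff.2 hm, zero_add, ← preimage_symmDiff,
          hΦ.measure_preimage (hB'.symmDiff (hB m)).nullMeasurableSet, symmDiff_comm]

theorem biUnion_biUnion_eq_of_saturated {α γ : Type*} {P : α → Set α} (hmem : ∀ x, x ∈ P x)
    {U : Set α} (hU : ∀ y ∈ U, P y ⊆ U) (f : α → Set γ) :
    ⋃ y ∈ U, ⋃ z ∈ P y, f z = ⋃ z ∈ U, f z := by
  refine subset_antisymm (iUnion₂_subset fun y hy => ?_) (iUnion₂_subset fun z hz => ?_)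
  · exact biUnion_subset_biUnion_left (hU y hy)
  · exact (subset_biUnion_of_mem (u := f) (hmem z)).trans
      (subset_biUnion_of_mem (u := fun y => ⋃ z ∈ P y, f z) hz)

theorem atom_subset_of_le {α : Type*} {P : ℕ → α → Set α} (hmono : ∀ n x, P (n + 1) x ⊆ P n x)
    {n m : ℕ} (h : n ≤ m) (x : α) : P m x ⊆ P n x :=
  antitone_nat_of_succ_le (f := fun n => P n x) (fun n => hmono n x) h

section AtomChain

variable {α β : Type*} {P : ℕ → α → Set α} {Q : ℕ → β → Set β} {K : ℕ → Set α → Set β}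

theorem biUnion_K_eq_of_le [MeasurableSpace α] (hP : ∀ n, IsFinitePartition (P n))
    (hmono : ∀ n x, P (n + 1) x ⊆ P n x)
    (hcoh : ∀ n x, ⋃ y ∈ P n x, K (n + 1) (P (n + 1) y) = K n (P n x))
    {n m : ℕ} (h : n ≤ m) (x : α) : ⋃ y ∈ P n x, K m (P m y) = K n (P n x) := by
  induction m, h using Nat.le_induction with
  | base =>
    refine subset_antisymm (iUnion₂_subset fun y hy => ?_)
      (subset_biUnion_of_mem (u := fun y => K n (P n y)) ((hP n).mem x))
    rw [(hP n).eq_of_mem hy]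
  | succ m hnm ih =>
    have hsat : ∀ y ∈ P n x, P m y ⊆ P n x := fun y hy =>
      (hP n).eq_of_mem hy ▸ atom_subset_of_le hmono hnm y
    rw [← ih, ← biUnion_biUnion_eq_of_saturated (hP m).mem hsat]
    exact iUnion₂_congr fun y _ => hcoh m y

theorem K_subset_of_le [MeasurableSpace α] (hP : ∀ n, IsFinitePartition (P n))
    (hmono : ∀ n x, P (n + 1) x ⊆ P n x)
    (hcoh : ∀ n x, ⋃ y ∈ P n x, K (n + 1) (P (n + 1) y) = K n (P n x))
    {n m : ℕ} (h : n ≤ m) (x : α) : K m (P m x) ⊆ K n (P n x) :=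
  biUnion_K_eq_of_le hP hmono hcoh h x ▸
    subset_biUnion_of_mem (u := fun y => K m (P m y)) ((hP n).mem x)

theorem eq_K_of_mem_K [MeasurableSpace α] [MeasurableSpace β]
    (hP : ∀ n, IsFinitePartition (P n)) (hQ : ∀ n, IsFinitePartition (Q n))
    (hmono : ∀ n x, P (n + 1) x ⊆ P n x) (hKQ : ∀ n x, ∃ y, K n (P n x) = Q n y)
    (hcoh : ∀ n x, ⋃ y ∈ P n x, K (n + 1) (P (n + 1) y) = K n (P n x))
    {n m : ℕ} (h : n ≤ m) {x : α} {y : β} (hy : y ∈ K m (P m x)) : Q n y = K n (P n x) := by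
  obtain ⟨z, hz⟩ := hKQ n x
  have hyn := K_subset_of_le hP hmono hcoh h x hy
  rw [hz] at hyn ⊢
  exact (hQ n).eq_of_mem hyn

theorem map_code_K_eq_map_code [MeasurableSpace α] [MeasurableSpace β] {μ : Measure α}
    {ν : Measure β} [IsFiniteMeasure μ] (hP : ∀ n, IsFinitePartition (P n))
    (hQ : ∀ n, IsFinitePartition (Q n)) (hPmono : ∀ n x, P (n + 1) x ⊆ P n x)
    (hQmono : ∀ n y, Q (n + 1) y ⊆ Q n y) (hK : ∀ n, IsAtomIso μ ν (P n) (Q n) (K n))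
    (hcoh : ∀ n x, ⋃ y ∈ P n x, K (n + 1) (P (n + 1) y) = K n (P n x)) (c : Set β → β) :
    μ.map (fun x n => c (K n (P n x))) = ν.map (fun y n => c (Q n y)) := by
  set F : α → ℕ → β := fun x n => c (K n (P n x))
  set G : β → ℕ → β := fun y n => c (Q n y)
  have hF : Measurable F := measurable_pi_lambda _ fun n => (hP n).measurable_comp (c ∘ K n)
  have hG : Measurable G := measurable_pi_lambda _ fun n => (hQ n).measurable_comp c
  refine ext_of_generate_finite _ generateFrom_measurableCylinders.symm
    isPiSystem_measurableCylinders ?_ ?_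
  · intro t ht
    obtain ⟨s, S, hS, rfl⟩ := (mem_measurableCylinders t).1 ht
    rw [Measure.map_apply hF hS.cylinder, Measure.map_apply hG hS.cylinder]
    -- The cylinder only sees the levels `i ≤ N`, on which both codes are read off the level-`N`
    -- atom `B` by the predicate `p B`.
    set N := s.sup id
    have hcyl : ∀ f f' : ℕ → β, (∀ i ≤ N, f i = f' i) →
        (f ∈ cylinder s S ↔ f' ∈ cylinder s S) := fun f f' h => by
      simp only [mem_cylinder]
      rw [show s.restrict f = s.restrict f' from
        funext fun i => h i (Finset.le_sup (f := id) i.2)]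
    set p : Set β → Prop := fun B => ∃ y ∈ B, G y ∈ cylinder s S
    have hFp : F ⁻¹' cylinder s S = {x | p (K N (P N x))} := by
      ext x
      have hagree : ∀ y ∈ K N (P N x), ∀ i ≤ N, G y i = F x i := fun y hy i hi =>
        congrArg c (eq_K_of_mem_K hP hQ hPmono (fun n => (hK n).exists_eq) hcoh hi hy)
      obtain ⟨z, hz⟩ := (hK N).exists_eq x
      refine ⟨fun hx => ⟨z, hz ▸ (hQ N).mem z, ?_⟩, fun ⟨y, hy, hGy⟩ => ?_⟩
      · exact (hcyl _ _ (hagree z (hz ▸ (hQ N).mem z))).2 hx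
      · exact (hcyl _ _ (hagree y hy)).1 hGy
    have hGp : G ⁻¹' cylinder s S = {y | p (Q N y)} := by
      ext y
      have hagree : ∀ y' ∈ Q N y, ∀ i ≤ N, G y' i = G y i := fun y' hy' i hi =>
        congrArg c ((hQ i).eq_of_mem (atom_subset_of_le hQmono hi y hy'))
      exact ⟨fun hy => ⟨y, (hQ N).mem y, hy⟩,
        fun ⟨y', hy', hGy'⟩ => (hcyl _ _ (hagree y' hy')).1 hGy'⟩
    rw [hFp, hGp]
    exact (hK N).measure_setOf (hP N) (hQ N) p
  · rw [Measure.map_apply hF .univ, Measure.map_apply hG .univ]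
    simpa using (hK 0).measure_setOf (hP 0) (hQ 0) fun _ => True

theorem exists_measurePreserving_of_atomIso [MeasurableSpace α] [MeasurableSpace β]
    [StandardBorelSpace β] [Nonempty β] {μ : Measure α} {ν : Measure β} [IsFiniteMeasure μ]
    (hP : ∀ n, IsFinitePartition (P n)) (hQ : ∀ n, IsFinitePartition (Q n))
    (hPmono : ∀ n x, P (n + 1) x ⊆ P n x) (hQmono : ∀ n y, Q (n + 1) y ⊆ Q n y)
    (hQgen : ∀ᵐ y ∂ν, ⋂ n, Q n y = {y}) (hK : ∀ n, IsAtomIso μ ν (P n) (Q n) (K n))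
    (hcoh : ∀ n x, ⋃ y ∈ P n x, K (n + 1) (P (n + 1) y) = K n (P n x)) :
    ∃ Φ : α → β, MeasurePreserving Φ μ ν ∧ ∀ᵐ x ∂μ, ∀ n, Q n (Φ x) = K n (P n x) := by
  -- An atom is coded by one of its points, so that codes of chains of atoms lie in the
  -- standard Borel space `ℕ → β`.
  set c : Set β → β := fun A => Classical.epsilon (· ∈ A)
  have hcmem : ∀ n y, c (Q n y) ∈ Q n y := fun n y => Classical.epsilon_spec ⟨y, (hQ n).mem y⟩
  have hc : ∀ n y y', c (Q n y) = c (Q n y') → Q n y = Q n y' := fun n y y' h =>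
    (hQ n).eq_of_mem_of_mem (hcmem n y) (h ▸ hcmem n y')
  set F : α → ℕ → β := fun x n => c (K n (P n x))
  set G : β → ℕ → β := fun y n => c (Q n y)
  have hG : MeasurePreserving G ν (ν.map G) :=
    ⟨measurable_pi_lambda _ fun n => (hQ n).measurable_comp c, rfl⟩
  have hF : MeasurePreserving F μ (ν.map G) :=
    ⟨measurable_pi_lambda _ fun n => (hP n).measurable_comp (c ∘ K n),
      map_code_K_eq_map_code hP hQ hPmono hQmono hK hcoh c⟩
  have hGinj : InjOn G {y | ⋂ n, Q n y = {y}} := fun y hy y' _ h => by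
    have : y' ∈ ⋂ n, Q n y := mem_iInter.2 fun n =>
      hc n y' y (congrFun h.symm n) ▸ (hQ n).mem y'
    rw [show ⋂ n, Q n y = {y} from hy] at this
    exact this.symm
  obtain ⟨ρ, hρ, -, hGρ⟩ := hG.exists_ae_inverse hQgen hGinj
  refine ⟨ρ ∘ F, hρ.comp hF, ?_⟩
  filter_upwards [hF.quasiMeasurePreserving.ae hGρ] with x hx n
  obtain ⟨z, hz⟩ := (hK n).exists_eq x
  rw [hz]
  exact hc n _ _ (hz ▸ congrFun hx n)

theorem injOn_of_eq_K (hPmem : ∀ n x, x ∈ P n x)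
    (hKinj : ∀ n x x', K n (P n x) = K n (P n x') → P n x = P n x') (Φ : α → β) :
    InjOn Φ {x | ⋂ n, P n x = {x} ∧ ∀ n, Q n (Φ x) = K n (P n x)} := by
  rintro x ⟨hgen, hx⟩ x' ⟨-, hx'⟩ h
  have : x' ∈ ⋂ n, P n x := mem_iInter.2 fun n =>
    hKinj n x x' (by rw [← hx, ← hx', h]) ▸ hPmem n x'
  rw [hgen] at this
  exact this.symm

theorem image_K_eq_biUnion [MeasurableSpace α] (hP : ∀ n, IsFinitePartition (P n))
    (hmono : ∀ n x, P (n + 1) x ⊆ P n x)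
    (hcoh : ∀ n x, ⋃ y ∈ P n x, K (n + 1) (P (n + 1) y) = K n (P n x))
    {T : α → α} {T' : β → β} {m : ℕ} (hKT : ∀ x, K m (P m (T x)) = T' '' K m (P m x))
    {n : ℕ} (h : n ≤ m) (w : α) :
    T' '' K n (P n w) = ⋃ z ∈ T '' P n w, K m (P m z) := by
  rw [← biUnion_K_eq_of_le hP hmono hcoh h w, image_iUnion₂, biUnion_image]
  exact iUnion₂_congr fun x _ => (hKT x).symm

theorem image_atom_saturated [MeasurableSpace α] (hmono : ∀ n x, P (n + 1) x ⊆ P n x)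
    {n : ℕ} (hP : IsFinitePartition (P n)) {T : α → α} {m : ℕ}
    (hTP : ∀ x, T '' P m x = P m (T x)) (h : n ≤ m) (w : α) :
    ∀ z ∈ T '' P n w, P m z ⊆ T '' P n w := by
  rintro _ ⟨y, hy, rfl⟩
  rw [← hTP y]
  exact image_mono ((hP.eq_of_mem hy) ▸ atom_subset_of_le hmono h y)

theorem mem_biUnion_K_iff {P : α → Set α} {k : Set α → Set β} [MeasurableSpace β]
    {Q : β → Set β} (hPmem : ∀ x, x ∈ P x) (hQ : IsFinitePartition Q)
    (hkQ : ∀ x, ∃ y, k (P x) = Q y) (hkinj : ∀ x x', k (P x) = k (P x') → P x = P x')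
    {U : Set α} (hU : ∀ x ∈ U, P x ⊆ U) {x : α} {y : β} (hxy : Q y = k (P x)) :
    y ∈ ⋃ x' ∈ U, k (P x') ↔ x ∈ U := by
  refine ⟨fun hy => ?_, fun hx => mem_biUnion hx (hxy ▸ hQ.mem y)⟩
  obtain ⟨x', hx'U, hyx'⟩ := mem_iUnion₂.1 hy
  obtain ⟨z, hz⟩ := hkQ x'
  rw [hz] at hyx'
  have : P x = P x' := hkinj x x' (by rw [← hxy, hz, hQ.eq_of_mem hyx'])
  exact hU x' hx'U (this ▸ hPmem x)

theorem preimage_image_K_ae_eq [MeasurableSpace α] [MeasurableSpace β] {μ : Measure α}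
    (hP : ∀ n, IsFinitePartition (P n)) (hQ : ∀ n, IsFinitePartition (Q n))
    (hmono : ∀ n x, P (n + 1) x ⊆ P n x) (hKQ : ∀ n x, ∃ y, K n (P n x) = Q n y)
    (hKinj : ∀ n x x', K n (P n x) = K n (P n x') → P n x = P n x')
    (hcoh : ∀ n x, ⋃ y ∈ P n x, K (n + 1) (P (n + 1) y) = K n (P n x))
    {Φ : α → β} (hΦK : ∀ᵐ x ∂μ, ∀ n, Q n (Φ x) = K n (P n x))
    {T : α → α} {T' : β → β} {m : ℕ} (hTP : ∀ x, T '' P m x = P m (T x))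
    (hKT : ∀ x, K m (P m (T x)) = T' '' K m (P m x)) {n : ℕ} (h : n ≤ m) (w : α) :
    Φ ⁻¹' (T' '' K n (P n w)) =ᵐ[μ] T '' P n w := by
  rw [image_K_eq_biUnion hP hmono hcoh hKT h w, eventuallyEq_set]
  filter_upwards [hΦK] with x hx
  exact mem_biUnion_K_iff (hP m).mem (hQ m) (hKQ m) (hKinj m)
    (image_atom_saturated hmono (hP n) hTP h w) (hx m)

theorem ae_comp_eq_comp_of_preimage_ae_eq [MeasurableSpace α] {μ : Measure α}
    (hP : ∀ n, IsFinitePartition (P n)) {Φ : α → β}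
    (hΦK : ∀ᵐ x ∂μ, ∀ n, Q n (Φ x) = K n (P n x)) (hΦgen : ∀ᵐ x ∂μ, ⋂ n, Q n (Φ x) = {Φ x})
    {S : α → α} {S' : β → β} (hS : Measure.QuasiMeasurePreserving S μ μ)
    (hS' : Function.Injective S')
    (h : ∀ n w, Φ ⁻¹' (S' '' K n (P n w)) =ᵐ[μ] S '' P n w) :
    ∀ᵐ x ∂μ, Φ (S x) = S' (Φ x) := by
  have hatoms : ∀ᵐ z ∂μ, ∀ n, ∀ A ∈ range (P n), (z ∈ Φ ⁻¹' (S' '' K n A) ↔ z ∈ S '' A) :=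
    ae_all_iff.2 fun n => (ae_ball_iff (hP n).finite_range.countable).2 fun _ ⟨w, hw⟩ =>
      hw ▸ eventuallyEq_set.1 (h n w)
  filter_upwards [hΦK, hΦgen, hS.ae hatoms] with x hxK hxgen hxS
  have : Φ (S x) ∈ ⋂ n, S' '' Q n (Φ x) := mem_iInter.2 fun n => by
    rw [hxK n]
    exact (hxS n _ ⟨x, rfl⟩).2 (mem_image_of_mem S ((hP n).mem x))
  rwa [← hS'.injOn.image_iInter_eq, hxgen, image_singleton] at this

end AtomChain

theorem stmt10_general
    {M₁ M₂ : Type*} [MeasurableSpace M₁] [MeasurableSpace M₂]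
    [StandardBorelSpace M₁] [StandardBorelSpace M₂]
    (μ₁ : Measure M₁) (μ₂ : Measure M₂)
    [IsProbabilityMeasure μ₁] [IsProbabilityMeasure μ₂]
    -- monotone generating sequences of finite partitions, given by atom maps
    (P₁ : ℕ → M₁ → Set M₁) (P₂ : ℕ → M₂ → Set M₂)
    (hP₁mem : ∀ n x, x ∈ P₁ n x) (hP₂mem : ∀ n y, y ∈ P₂ n y)
    (hP₁part : ∀ n x y, P₁ n x = P₁ n y ∨ Disjoint (P₁ n x) (P₁ n y))
    (hP₂part : ∀ n x y, P₂ n x = P₂ n y ∨ Disjoint (P₂ n x) (P₂ n y))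
    (hP₁meas : ∀ n x, MeasurableSet (P₁ n x)) (hP₂meas : ∀ n y, MeasurableSet (P₂ n y))
    (hP₁fin : ∀ n, (Set.range (P₁ n)).Finite) (hP₂fin : ∀ n, (Set.range (P₂ n)).Finite)
    (hP₁mono : ∀ n x, P₁ (n + 1) x ⊆ P₁ n x) (hP₂mono : ∀ n y, P₂ (n + 1) y ⊆ P₂ n y)
    (hP₁gen : ∀ᵐ x ∂μ₁, (⋂ n, P₁ n x) = {x}) (hP₂gen : ∀ᵐ y ∂μ₂, (⋂ n, P₂ n y) = {y})
    -- the automorphisms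
    (T₁ : ℕ → M₁ → M₁) (T₂ : ℕ → M₂ → M₂)
    (hT₂ : ∀ n, MeasurePreserving (T₂ n) μ₂ μ₂ ∧ Function.Bijective (T₂ n))
    (hT₁P : ∀ n x, T₁ n '' P₁ n x = P₁ n (T₁ n x))
    (S₁ : M₁ → M₁) (S₂ : M₂ → M₂)
    (hS₁ : MeasurePreserving S₁ μ₁ μ₁ ∧ Function.Bijective S₁)
    (hS₂ : MeasurePreserving S₂ μ₂ μ₂ ∧ Function.Bijective S₂)
    -- weak convergence T_n → T
    (hw₁ : ∀ A : Set M₁, MeasurableSet A →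
      Tendsto (fun n => μ₁ (symmDiff (T₁ n '' A) (S₁ '' A))) atTop (nhds 0))
    (hw₂ : ∀ A : Set M₂, MeasurableSet A →
      Tendsto (fun n => μ₂ (symmDiff (T₂ n '' A) (S₂ '' A))) atTop (nhds 0))
    -- the partition-quotient isomorphisms K_n
    (K : ℕ → Set M₁ → Set M₂)
    (hKatom : ∀ n x, ∃ y, K n (P₁ n x) = P₂ n y)
    (hKmp : ∀ n x, μ₂ (K n (P₁ n x)) = μ₁ (P₁ n x))
    (hKinj : ∀ n x x', K n (P₁ n x) = K n (P₁ n x') → P₁ n x = P₁ n x')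
    (hKsurj : ∀ n y, ∃ x, K n (P₁ n x) = P₂ n y)
    -- K_n⁻¹ ∘ T_n⁽²⁾ ∘ K_n = T_n⁽¹⁾ on atoms
    (hKT : ∀ n x, K n (P₁ n (T₁ n x)) = T₂ n '' K n (P₁ n x))
    -- K_{n+1}(P_n⁽¹⁾) = K_n(P_n⁽¹⁾)
    (hKcoh : ∀ n x, (⋃ y ∈ P₁ n x, K (n + 1) (P₁ (n + 1) y)) = K n (P₁ n x)) :
    ∃ Φ : M₁ → M₂, MeasurePreserving Φ μ₁ μ₂ ∧
      (∀ᵐ x ∂μ₁, Φ (S₁ x) = S₂ (Φ x)) ∧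
      ∃ Ψ : M₂ → M₁, MeasurePreserving Ψ μ₂ μ₁ ∧
        (∀ᵐ x ∂μ₁, Ψ (Φ x) = x) ∧ (∀ᵐ y ∂μ₂, Φ (Ψ y) = y) := by
  have hP₁ n : IsFinitePartition (P₁ n) := ⟨hP₁mem n, hP₁part n, hP₁meas n, hP₁fin n⟩
  have hP₂ n : IsFinitePartition (P₂ n) := ⟨hP₂mem n, hP₂part n, hP₂meas n, hP₂fin n⟩
  have hK n : IsAtomIso μ₁ μ₂ (P₁ n) (P₂ n) (K n) := ⟨hKatom n, hKmp n, hKinj n, hKsurj n⟩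
  have := nonempty_of_isProbabilityMeasure μ₁
  have := nonempty_of_isProbabilityMeasure μ₂
  obtain ⟨Φ, hΦ, hΦK⟩ :=
    exists_measurePreserving_of_atomIso hP₁ hP₂ hP₁mono hP₂mono hP₂gen hK hKcoh
  have hKmeas n w : MeasurableSet (K n (P₁ n w)) := (hK n).measurableSet (hP₂ n) w
  have hΦS n w : Φ ⁻¹' (S₂ '' K n (P₁ n w)) =ᵐ[μ₁] S₁ '' P₁ n w :=
    hΦ.preimage_ae_eq_of_tendsto
      (fun m => (hKmeas n w).image_of_measurable_injOn (hT₂ m).1.measurable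
        (hT₂ m).2.injective.injOn)
      ((hKmeas n w).image_of_measurable_injOn hS₂.1.measurable hS₂.2.injective.injOn)
      (hw₁ _ (hP₁meas n w)) (hw₂ _ (hKmeas n w)) <| eventually_atTop.2 ⟨n, fun m hm =>
        preimage_image_K_ae_eq hP₁ hP₂ hP₁mono hKatom hKinj hKcoh hΦK (hT₁P m) (hKT m) hm w⟩
  obtain ⟨Ψ, hΨ, hΨΦ, hΦΨ⟩ :=
    hΦ.exists_ae_inverse (hP₁gen.and hΦK) (injOn_of_eq_K hP₁mem hKinj Φ)
  refine ⟨Φ, hΦ, ?_, Ψ, hΨ, hΨΦ, hΦΨ⟩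
  exact ae_comp_eq_comp_of_preimage_ae_eq hP₁ hΦK (hΦ.quasiMeasurePreserving.ae hP₂gen)
    hS₁.1.quasiMeasurePreserving hS₂.2.injective hΦS

theorem stmt10
    {M₁ M₂ : Type*} [MeasurableSpace M₁] [MeasurableSpace M₂]
    [StandardBorelSpace M₁] [StandardBorelSpace M₂]
    (μ₁ : Measure M₁) (μ₂ : Measure M₂)
    [IsProbabilityMeasure μ₁] [IsProbabilityMeasure μ₂]
    -- monotone generating sequences of finite partitions, given by atom maps
    (P₁ : ℕ → M₁ → Set M₁) (P₂ : ℕ → M₂ → Set M₂)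
    (hP₁mem : ∀ n x, x ∈ P₁ n x) (hP₂mem : ∀ n y, y ∈ P₂ n y)
    (hP₁part : ∀ n x y, P₁ n x = P₁ n y ∨ Disjoint (P₁ n x) (P₁ n y))
    (hP₂part : ∀ n x y, P₂ n x = P₂ n y ∨ Disjoint (P₂ n x) (P₂ n y))
    (hP₁meas : ∀ n x, MeasurableSet (P₁ n x)) (hP₂meas : ∀ n y, MeasurableSet (P₂ n y))
    (hP₁fin : ∀ n, (Set.range (P₁ n)).Finite) (hP₂fin : ∀ n, (Set.range (P₂ n)).Finite)
    (hP₁mono : ∀ n x, P₁ (n + 1) x ⊆ P₁ n x) (hP₂mono : ∀ n y, P₂ (n + 1) y ⊆ P₂ n y)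
    (hP₁gen : ∀ᵐ x ∂μ₁, (⋂ n, P₁ n x) = {x}) (hP₂gen : ∀ᵐ y ∂μ₂, (⋂ n, P₂ n y) = {y})
    -- the automorphisms
    (T₁ : ℕ → M₁ → M₁) (T₂ : ℕ → M₂ → M₂)
    (hT₁ : ∀ n, MeasurePreserving (T₁ n) μ₁ μ₁ ∧ Function.Bijective (T₁ n))
    (hT₂ : ∀ n, MeasurePreserving (T₂ n) μ₂ μ₂ ∧ Function.Bijective (T₂ n))
    (hT₁P : ∀ n x, T₁ n '' P₁ n x = P₁ n (T₁ n x))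
    (hT₂P : ∀ n y, T₂ n '' P₂ n y = P₂ n (T₂ n y))
    (S₁ : M₁ → M₁) (S₂ : M₂ → M₂)
    (hS₁ : MeasurePreserving S₁ μ₁ μ₁ ∧ Function.Bijective S₁)
    (hS₂ : MeasurePreserving S₂ μ₂ μ₂ ∧ Function.Bijective S₂)
    -- weak convergence T_n → T
    (hw₁ : ∀ A : Set M₁, MeasurableSet A →
      Tendsto (fun n => μ₁ (symmDiff (T₁ n '' A) (S₁ '' A))) atTop (nhds 0))
    (hw₂ : ∀ A : Set M₂, MeasurableSet A →
      Tendsto (fun n => μ₂ (symmDiff (T₂ n '' A) (S₂ '' A))) atTop (nhds 0))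
    -- the partition-quotient isomorphisms K_n
    (K : ℕ → Set M₁ → Set M₂)
    (hKatom : ∀ n x, ∃ y, K n (P₁ n x) = P₂ n y)
    (hKmp : ∀ n x, μ₂ (K n (P₁ n x)) = μ₁ (P₁ n x))
    (hKinj : ∀ n x x', K n (P₁ n x) = K n (P₁ n x') → P₁ n x = P₁ n x')
    (hKsurj : ∀ n y, ∃ x, K n (P₁ n x) = P₂ n y)
    -- K_n⁻¹ ∘ T_n⁽²⁾ ∘ K_n = T_n⁽¹⁾ on atoms
    (hKT : ∀ n x, K n (P₁ n (T₁ n x)) = T₂ n '' K n (P₁ n x))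
    -- K_{n+1}(P_n⁽¹⁾) = K_n(P_n⁽¹⁾)
    (hKcoh : ∀ n x, (⋃ y ∈ P₁ n x, K (n + 1) (P₁ (n + 1) y)) = K n (P₁ n x)) :
    ∃ Φ : M₁ → M₂, MeasurePreserving Φ μ₁ μ₂ ∧
      (∀ᵐ x ∂μ₁, Φ (S₁ x) = S₂ (Φ x)) ∧
      ∃ Ψ : M₂ → M₁, MeasurePreserving Ψ μ₂ μ₁ ∧
        (∀ᵐ x ∂μ₁, Ψ (Φ x) = x) ∧ (∀ᵐ y ∂μ₂, Φ (Ψ y) = y) :=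
  stmt10_general μ₁ μ₂ P₁ P₂ hP₁mem hP₂mem hP₁part hP₂part hP₁meas hP₂meas hP₁fin hP₂fin hP₁mono
    hP₂mono hP₁gen hP₂gen T₁ T₂ hT₂ hT₁P S₁ S₂ hS₁ hS₂ hw₁ hw₂ K hKatom hKmp hKinj hKsurj hKT hKcoh
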